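/- Let A be an n×n nonnegative real matrix with all row sums nonzero, and let M > 0, N ≥ 0, k ≥ 0 be integers such that A^{M+N} is irreducible. Then equality holds on either side (and hence both sides) of the bound min_{(i,j): a_{ij}^{(M)}>0} ( r_i(A^{k+M}) r_j(A^{k+N}) / (r_i(A^k) r_j(A^k)) )^{1/(M+N)} ≤ ρ(A) ≤ max_{(i,j): a_{ij}^{(M)}>0} ( r_i(A^{k+M}) r_j(A^{k+N}) / (r_i(A^k) r_j(A^k)) )^{1/(M+N)} if and only if r_i(A^{k+1}) / r_i(A^k) = ρ(A) for every i ∈ {1,…,n}. -/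

import Mathlib

open Matrix

/-- The spectral radius of a real square matrix: the maximum modulus of its
complex eigenvalues (elements of the spectrum of the matrix over `ℂ`). -/
noncomputable def specRad {n : ℕ} (A : Matrix (Fin n) (Fin n) ℝ) : ℝ :=
  sSup ((fun μ : ℂ => ‖μ‖) '' spectrum ℂ (A.map (fun x : ℝ => (x : ℂ))))

/-- `rowSum A i` is the `i`-th row sum of `A`. -/
noncomputable def rowSum {n : ℕ} (A : Matrix (Fin n) (Fin n) ℝ) (i : Fin n) : ℝ :=
  ∑ j, A i j

/-- A square matrix is irreducible if it cannot be symmetrically permuted to a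
nontrivial block upper-triangular form; equivalently, for every nonempty proper
subset `S` of indices there is a nonzero entry leading from `S` to its complement. -/
def IsIrred {n : ℕ} (A : Matrix (Fin n) (Fin n) ℝ) : Prop :=
  ∀ S : Set (Fin n), S.Nonempty → S ≠ Set.univ → ∃ i ∈ S, ∃ j ∈ Sᶜ, A i j ≠ 0

/-! Write `v = r(A^k)`, so that `r(A^{k+m}) = A^m v` and the `(i, j)` term of the bounds is
`((A^M v)_i (A^N v)_j / (v_i v_j))^{1/(M+N)}`. Expanding
`(A^{M+N} v)_i = ∑_j a_{ij}^{(M)} (A^N v)_j` shows that if every term is `≤ ρ`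
(resp. `≥ ρ`), then `A^{M+N} v ≤ ρ^{M+N} v` (resp. `≥`). For the irreducible matrix
`B = A^{M+N}`, whose spectral radius is `ρ^{M+N}`, such a one-sided inequality against a
positive vector is an equality: otherwise `u = (1 + B)^{n-1} v` would satisfy `B u < ρ(B) u`
(resp. `>`) entrywise, contradicting the Collatz–Wielandt bounds. Then `v` and `A v` are
positive eigenvectors of `B` for the same eigenvalue, hence proportional, and `A v = c v`
forces `c = ρ(A)`. Conversely, if `A v = ρ v` then every term of the bounds equals `ρ`. -/

open Finset

section Nonneg

variable {ι : Type*} [Fintype ι]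

lemma mulVec_nonneg {A : Matrix ι ι ℝ} (hA : ∀ i j, 0 ≤ A i j) {u : ι → ℝ}
    (hu : ∀ i, 0 ≤ u i) (i : ι) : 0 ≤ (A *ᵥ u) i :=
  sum_nonneg fun j _ => mul_nonneg (hA i j) (hu j)

lemma mulVec_mono {A : Matrix ι ι ℝ} (hA : ∀ i j, 0 ≤ A i j) {u w : ι → ℝ}
    (h : ∀ i, u i ≤ w i) (i : ι) : (A *ᵥ u) i ≤ (A *ᵥ w) i :=
  sum_le_sum fun j _ => mul_le_mul_of_nonneg_left (h j) (hA i j)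

lemma single_le_mulVec {A : Matrix ι ι ℝ} (hA : ∀ i j, 0 ≤ A i j) {u : ι → ℝ}
    (hu : ∀ i, 0 ≤ u i) (i j : ι) : A i j * u j ≤ (A *ᵥ u) i :=
  single_le_sum (f := fun l => A i l * u l) (fun l _ => mul_nonneg (hA i l) (hu l))
    (mem_univ j)

lemma mulVec_pos {A : Matrix ι ι ℝ} (hA : ∀ i j, 0 ≤ A i j) (hr : ∀ i, ∑ j, A i j ≠ 0)
    {u : ι → ℝ} (hu : ∀ i, 0 < u i) (i : ι) : 0 < (A *ᵥ u) i := by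
  obtain ⟨j, hj⟩ : ∃ j, 0 < A i j := by
    by_contra! h
    exact hr i (sum_eq_zero fun j _ => le_antisymm (h j) (hA i j))
  exact (mul_pos hj (hu j)).trans_le (single_le_mulVec hA (fun l => (hu l).le) i j)

lemma pow_mul_le_pow_mulVec [DecidableEq ι] {A : Matrix ι ι ℝ} (hA : ∀ i j, 0 ≤ A i j)
    {u : ι → ℝ} {c : ℝ} (hc : 0 ≤ c) (h : ∀ i, c * u i ≤ (A *ᵥ u) i) (m : ℕ)
    (i : ι) : c ^ m * u i ≤ (A ^ m *ᵥ u) i := by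
  induction m generalizing i with
  | zero => simp
  | succ m ih =>
    calc c ^ (m + 1) * u i = c * (c ^ m * u i) := by ring
      _ ≤ c * (A ^ m *ᵥ u) i := mul_le_mul_of_nonneg_left (ih i) hc
      _ = (A ^ m *ᵥ (c • u)) i := by simp [mulVec_smul]
      _ ≤ (A ^ m *ᵥ (A *ᵥ u)) i := mulVec_mono (pow_apply_nonneg hA m) h i
      _ = (A ^ (m + 1) *ᵥ u) i := by rw [mulVec_mulVec, ← pow_succ]

lemma norm_map_ofReal_mulVec_le {A : Matrix ι ι ℝ} (hA : ∀ i j, 0 ≤ A i j) (z : ι → ℂ)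
    (i : ι) :
    ‖(A.map ((↑) : ℝ → ℂ) *ᵥ z) i‖ ≤ (A *ᵥ fun j => ‖z j‖) i :=
  calc ‖(A.map ((↑) : ℝ → ℂ) *ᵥ z) i‖ ≤ ∑ j, ‖(A i j : ℂ) * z j‖ :=
        norm_sum_le _ _
    _ = (A *ᵥ fun j => ‖z j‖) i := by
      simp only [norm_mul, Complex.norm_real, Real.norm_of_nonneg (hA i _)]; rfl

end Nonneg

section SpectralRadius

variable {n : ℕ}

lemma map_ofReal_pow (A : Matrix (Fin n) (Fin n) ℝ) (m : ℕ) :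
    (A ^ m).map ((↑) : ℝ → ℂ) = A.map ((↑) : ℝ → ℂ) ^ m :=
  Matrix.map_pow A Complex.ofRealHom m

lemma exists_mulVec_eq_smul_of_mem_spectrum {B : Matrix (Fin n) (Fin n) ℂ} {μ : ℂ}
    (hμ : μ ∈ spectrum ℂ B) : ∃ z ≠ 0, B *ᵥ z = μ • z := by
  rw [← Matrix.spectrum_toLin', ← Module.End.hasEigenvalue_iff_mem_spectrum] at hμ
  obtain ⟨z, hz⟩ := hμ.exists_hasEigenvector
  exact ⟨z, hz.2, hz.apply_eq_smul⟩

lemma specRad_nonneg (A : Matrix (Fin n) (Fin n) ℝ) : 0 ≤ specRad A :=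
  Real.sSup_nonneg <| by rintro _ ⟨μ, -, rfl⟩; exact norm_nonneg μ

lemma bddAbove_norm_spectrum (A : Matrix (Fin n) (Fin n) ℝ) :
    BddAbove ((fun μ : ℂ => ‖μ‖) '' spectrum ℂ (A.map ((↑) : ℝ → ℂ))) :=
  ((Matrix.finite_spectrum _).image _).bddAbove

lemma norm_le_specRad {A : Matrix (Fin n) (Fin n) ℝ} {μ : ℂ}
    (hμ : μ ∈ spectrum ℂ (A.map ((↑) : ℝ → ℂ))) : ‖μ‖ ≤ specRad A :=
  le_csSup (bddAbove_norm_spectrum A) ⟨μ, hμ, rfl⟩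

lemma exists_norm_eq_specRad [NeZero n] (A : Matrix (Fin n) (Fin n) ℝ) :
    ∃ μ ∈ spectrum ℂ (A.map ((↑) : ℝ → ℂ)), ‖μ‖ = specRad A :=
  ((spectrum.nonempty_of_isAlgClosed_of_finiteDimensional ℂ _).image _).csSup_mem
    ((Matrix.finite_spectrum _).image _)

lemma specRad_of_isEmpty [IsEmpty (Fin n)] (A : Matrix (Fin n) (Fin n) ℝ) : specRad A = 0 := by
  simp [specRad, spectrum.of_subsingleton]

lemma specRad_pow [NeZero n] (A : Matrix (Fin n) (Fin n) ℝ) {p : ℕ} (hp : 0 < p) :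
    specRad (A ^ p) = specRad A ^ p := by
  have hσ : spectrum ℂ ((A ^ p).map ((↑) : ℝ → ℂ)) =
      (· ^ p) '' spectrum ℂ (A.map ((↑) : ℝ → ℂ)) := by
    rw [map_ofReal_pow]
    exact spectrum.map_pow_of_pos _ hp
  obtain ⟨μ, hμ, hμρ⟩ := exists_norm_eq_specRad A
  refine le_antisymm (Real.sSup_le ?_ (pow_nonneg (specRad_nonneg A) p)) ?_
  · rintro _ ⟨_, hν, rfl⟩
    rw [hσ] at hν
    obtain ⟨ν, hν, rfl⟩ := hν
    simpa only [norm_pow] using pow_le_pow_left₀ (norm_nonneg ν) (norm_le_specRad hν) p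
  · rw [← hμρ, ← norm_pow]
    exact norm_le_specRad (hσ ▸ ⟨μ, hμ, rfl⟩)

end SpectralRadius

section CollatzWielandt

variable {n : ℕ}

lemma specRad_le_of_mulVec_le {A : Matrix (Fin n) (Fin n) ℝ} (hA : ∀ i j, 0 ≤ A i j)
    {u : Fin n → ℝ} (hu : ∀ i, 0 < u i) {c : ℝ} (hc : 0 ≤ c)
    (h : ∀ i, (A *ᵥ u) i ≤ c * u i) : specRad A ≤ c := by
  refine Real.sSup_le ?_ hc
  rintro _ ⟨μ, hμ, rfl⟩
  obtain ⟨z, hz, hμz⟩ := exists_mulVec_eq_smul_of_mem_spectrum hμ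
  obtain ⟨i₀, hi₀⟩ : ∃ i, z i ≠ 0 := Function.ne_iff.mp hz
  obtain ⟨i, -, hi⟩ := exists_max_image univ (fun j => ‖z j‖ / u j) ⟨i₀, mem_univ _⟩
  set t := ‖z i‖ / u i
  have ht : 0 < t := (div_pos (norm_pos_iff.mpr hi₀) (hu i₀)).trans_le (hi i₀ (mem_univ _))
  have hzt : ∀ j, ‖z j‖ ≤ t * u j := fun j => (div_le_iff₀ (hu j)).mp (hi j (mem_univ _))
  have key : ‖μ‖ * (t * u i) ≤ c * (t * u i) :=
    calc ‖μ‖ * (t * u i) = ‖(A.map ((↑) : ℝ → ℂ) *ᵥ z) i‖ := by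
          rw [hμz, Pi.smul_apply, smul_eq_mul, norm_mul, div_mul_cancel₀ _ (hu i).ne']
      _ ≤ (A *ᵥ fun j => ‖z j‖) i := norm_map_ofReal_mulVec_le hA z i
      _ ≤ (A *ᵥ (t • u)) i := mulVec_mono hA hzt i
      _ = t * (A *ᵥ u) i := by simp [mulVec_smul]
      _ ≤ t * (c * u i) := mul_le_mul_of_nonneg_left (h i) ht.le
      _ = c * (t * u i) := by ring
  exact le_of_mul_le_mul_right key (mul_pos ht (hu i))

section Gelfand

attribute [local instance] Matrix.linftyOpNormedAddCommGroup Matrix.linftyOpNormedRing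
  Matrix.linftyOpNormedAlgebra

lemma norm_map_ofReal (A : Matrix (Fin n) (Fin n) ℝ) :
    ‖A.map ((↑) : ℝ → ℂ)‖ = ‖A‖ := by
  simp [Matrix.linfty_opNorm_def]

lemma pow_le_norm_pow_of_le_mulVec [NeZero n] {A : Matrix (Fin n) (Fin n) ℝ}
    (hA : ∀ i j, 0 ≤ A i j) {u : Fin n → ℝ} (hu : ∀ i, 0 < u i) {c : ℝ} (hc : 0 ≤ c)
    (h : ∀ i, c * u i ≤ (A *ᵥ u) i) (m : ℕ) : c ^ m ≤ ‖A ^ m‖ := by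
  obtain ⟨i, hi⟩ := Finite.exists_max u
  have hu_norm : ‖u‖ = u i :=
    le_antisymm ((pi_norm_le_iff_of_nonneg (hu i).le).mpr fun j => by
      simpa [Real.norm_of_nonneg (hu j).le] using hi j)
      ((Real.le_norm_self _).trans (norm_le_pi_norm u i))
  have : c ^ m * u i ≤ ‖A ^ m‖ * u i :=
    calc c ^ m * u i ≤ (A ^ m *ᵥ u) i := pow_mul_le_pow_mulVec hA hc h m i
      _ ≤ ‖A ^ m *ᵥ u‖ := (Real.le_norm_self _).trans (norm_le_pi_norm _ i)
      _ ≤ ‖A ^ m‖ * ‖u‖ := Matrix.linfty_opNorm_mulVec _ _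
      _ = ‖A ^ m‖ * u i := by rw [hu_norm]
  exact le_of_mul_le_mul_right this (hu i)

lemma spectralRadius_le_ofReal_specRad (A : Matrix (Fin n) (Fin n) ℝ) :
    spectralRadius ℂ (A.map ((↑) : ℝ → ℂ)) ≤ ENNReal.ofReal (specRad A) :=
  iSup₂_le fun μ hμ => by
    rw [← enorm_eq_nnnorm, ← ofReal_norm]
    exact ENNReal.ofReal_le_ofReal (norm_le_specRad hμ)

-- By Gelfand's formula, since `c ^ m ≤ ‖A ^ m‖` for the row-sum norm.
lemma le_specRad_of_le_mulVec [NeZero n] {A : Matrix (Fin n) (Fin n) ℝ}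
    (hA : ∀ i j, 0 ≤ A i j) {u : Fin n → ℝ} (hu : ∀ i, 0 < u i) {c : ℝ} (hc : 0 ≤ c)
    (h : ∀ i, c * u i ≤ (A *ᵥ u) i) : c ≤ specRad A := by
  have : CompleteSpace (Matrix (Fin n) (Fin n) ℂ) := FiniteDimensional.complete ℂ _
  set A' := A.map ((↑) : ℝ → ℂ)
  have hle : ∀ m : ℕ, 1 ≤ m →
      ENNReal.ofReal c ≤ (‖A' ^ m‖₊ : ENNReal) ^ (1 / (m : ℝ)) := by
    intro m hm
    have hm' : (m : ℝ) ≠ 0 := by positivity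
    rw [← enorm_eq_nnnorm, ← ofReal_norm, ENNReal.ofReal_rpow_of_nonneg (norm_nonneg _)
      (by positivity)]
    refine ENNReal.ofReal_le_ofReal ?_
    calc c = (c ^ m) ^ (1 / (m : ℝ)) := by
          rw [← Real.rpow_natCast, ← Real.rpow_mul hc, mul_one_div_cancel hm', Real.rpow_one]
      _ ≤ ‖A ^ m‖ ^ (1 / (m : ℝ)) := Real.rpow_le_rpow (pow_nonneg hc m)
          (pow_le_norm_pow_of_le_mulVec hA hu hc h m) (by positivity)
      _ = ‖A' ^ m‖ ^ (1 / (m : ℝ)) := by rw [← map_ofReal_pow, norm_map_ofReal]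
  have hgelfand := ge_of_tendsto (spectrum.pow_nnnorm_pow_one_div_tendsto_nhds_spectralRadius A')
    (Filter.eventually_atTop.mpr ⟨1, hle⟩)
  exact (ENNReal.ofReal_le_ofReal_iff (specRad_nonneg A)).mp
    (hgelfand.trans (spectralRadius_le_ofReal_specRad A))

end Gelfand

lemma specRad_lt_of_mulVec_lt [NeZero n] {A : Matrix (Fin n) (Fin n) ℝ}
    (hA : ∀ i j, 0 ≤ A i j) {u : Fin n → ℝ} (hu : ∀ i, 0 < u i) {c : ℝ}
    (h : ∀ i, (A *ᵥ u) i < c * u i) : specRad A < c := by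
  obtain ⟨i, -, hi⟩ := exists_max_image univ (fun j => (A *ᵥ u) j / u j) univ_nonempty
  refine (specRad_le_of_mulVec_le hA hu
    (div_nonneg (mulVec_nonneg hA (fun j => (hu j).le) i) (hu i).le)
    fun j => (div_le_iff₀ (hu j)).mp (hi j (mem_univ _))).trans_lt ?_
  exact (div_lt_iff₀ (hu i)).mpr (h i)

lemma lt_specRad_of_lt_mulVec [NeZero n] {A : Matrix (Fin n) (Fin n) ℝ}
    (hA : ∀ i j, 0 ≤ A i j) {u : Fin n → ℝ} (hu : ∀ i, 0 < u i) {c : ℝ}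
    (h : ∀ i, c * u i < (A *ᵥ u) i) : c < specRad A := by
  obtain ⟨i, -, hi⟩ := exists_min_image univ (fun j => (A *ᵥ u) j / u j) univ_nonempty
  refine ((lt_div_iff₀ (hu i)).mpr (h i)).trans_le (le_specRad_of_le_mulVec hA hu
    (div_nonneg (mulVec_nonneg hA (fun j => (hu j).le) i) (hu i).le)
    fun j => (le_div_iff₀ (hu j)).mp (hi j (mem_univ _)))

lemma specRad_eq_of_mulVec_eq_smul [NeZero n] {A : Matrix (Fin n) (Fin n) ℝ}
    (hA : ∀ i j, 0 ≤ A i j) {u : Fin n → ℝ} (hu : ∀ i, 0 < u i) {c : ℝ}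
    (h : A *ᵥ u = c • u) : specRad A = c := by
  have hAu : ∀ i, (A *ᵥ u) i = c * u i := fun i => by rw [h, Pi.smul_apply, smul_eq_mul]
  have hc : 0 ≤ c := nonneg_of_mul_nonneg_left
    ((hAu 0).symm ▸ mulVec_nonneg hA (fun j => (hu j).le) 0) (hu 0)
  exact le_antisymm (specRad_le_of_mulVec_le hA hu hc fun i => (hAu i).le)
    (le_specRad_of_le_mulVec hA hu hc fun i => (hAu i).ge)

end CollatzWielandt

lemma one_add_apply_nonneg {ι : Type*} [DecidableEq ι] {B : Matrix ι ι ℝ}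
    (hB : ∀ i j, 0 ≤ B i j) (i j : ι) : 0 ≤ (1 + B) i j :=
  add_nonneg (by rw [one_apply]; split_ifs <;> norm_num) (hB i j)

section OneAdd

variable {ι R : Type*} [Fintype ι] [DecidableEq ι] [CommRing R]

lemma mulVec_one_add_pow_mulVec (B : Matrix ι ι R) (m : ℕ) (v : ι → R) :
    B *ᵥ ((1 + B) ^ m *ᵥ v) = (1 + B) ^ m *ᵥ (B *ᵥ v) := by
  rw [mulVec_mulVec, mulVec_mulVec,
    (((Commute.one_left B).add_left (Commute.refl B)).pow_left m).eq]

lemma one_add_pow_mulVec_of_mulVec_eq_smul {B : Matrix ι ι R} {w : ι → R} {μ : R}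
    (h : B *ᵥ w = μ • w) (m : ℕ) : (1 + B) ^ m *ᵥ w = (1 + μ) ^ m • w := by
  induction m with
  | zero => simp
  | succ m ih =>
    rw [pow_succ', ← mulVec_mulVec, ih, mulVec_smul, add_mulVec, one_mulVec, h, pow_succ,
      mul_smul, add_smul, one_smul]

end OneAdd

namespace IsIrred

variable {n : ℕ} {B : Matrix (Fin n) (Fin n) ℝ}

-- Each application of `1 + B` keeps the positive entries and, by irreducibility, adds a new one.
lemma min_card_succ_le_card_one_add_mulVec (hB : ∀ i j, 0 ≤ B i j) (hirr : IsIrred B)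
    {x : Fin n → ℝ} (hx : ∀ i, 0 ≤ x i) (hx₀ : ∃ i, 0 < x i) :
    min (#{i | 0 < x i} + 1) n ≤ #{i | 0 < ((1 + B) *ᵥ x) i} := by
  have hsplit : ∀ i, ((1 + B) *ᵥ x) i = x i + (B *ᵥ x) i := fun i => by
    rw [add_mulVec, one_mulVec, Pi.add_apply]
  have hle : ∀ i, x i ≤ ((1 + B) *ᵥ x) i := fun i =>
    (hsplit i).symm ▸ le_add_of_nonneg_right (mulVec_nonneg hB hx i)
  have hsub : ({i | 0 < x i} : Finset (Fin n)) ⊆ ({i | 0 < ((1 + B) *ᵥ x) i} : Finset _) :=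
    fun i => by simpa using fun h => h.trans_le (hle i)
  by_cases hall : ∀ i, 0 < x i
  · refine (min_le_right _ _).trans (le_of_eq ?_)
    rw [filter_true_of_mem fun i _ => (hall i).trans_le (hle i), card_univ, Fintype.card_fin]
  obtain ⟨l, hl⟩ := hx₀
  obtain ⟨i, hi, j, hj, hij⟩ := hirr {i | x i ≤ 0} (by simpa [Set.Nonempty] using hall)
    fun h => absurd (Set.eq_univ_iff_forall.mp h l) (not_le.mpr hl)
  replace hi : x i ≤ 0 := hi
  replace hj : 0 < x j := not_le.mp hj
  have hi' : 0 < ((1 + B) *ᵥ x) i :=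
    calc 0 < B i j * x j := mul_pos ((hB i j).lt_of_ne' hij) hj
      _ ≤ (B *ᵥ x) i := single_le_mulVec hB hx i j
      _ ≤ ((1 + B) *ᵥ x) i := (hsplit i).symm ▸ le_add_of_nonneg_left (hx i)
  refine (min_le_left _ _).trans ?_
  rw [← card_insert_of_notMem (by simpa using hi)]
  exact card_le_card (insert_subset (by simpa using hi') hsub)

lemma one_add_pow_mulVec_pos (hB : ∀ i j, 0 ≤ B i j) (hirr : IsIrred B)
    {w : Fin n → ℝ} (hw : ∀ i, 0 ≤ w i) (hw₀ : ∃ i, 0 < w i) (i : Fin n) :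
    0 < ((1 + B) ^ (n - 1) *ᵥ w) i := by
  obtain ⟨i₀, hi₀⟩ := hw₀
  have hn : 0 < n := i₀.pos
  have hcard : ∀ m, min (m + 1) n ≤ #{i | 0 < ((1 + B) ^ m *ᵥ w) i} := by
    intro m
    induction m with
    | zero => exact (min_le_left _ _).trans (card_pos.mpr ⟨i₀, by simpa using hi₀⟩)
    | succ m ih =>
      have hx := mulVec_nonneg (pow_apply_nonneg (one_add_apply_nonneg hB) m) hw
      obtain ⟨l, hl⟩ : (({i | 0 < ((1 + B) ^ m *ᵥ w) i} : Finset (Fin n))).Nonempty :=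
        card_pos.mp (lt_of_lt_of_le (by omega) ih)
      rw [pow_succ', ← mulVec_mulVec]
      refine le_trans ?_
        (min_card_succ_le_card_one_add_mulVec hB hirr hx ⟨l, by simpa using hl⟩)
      omega
  have hfull : #{i | 0 < ((1 + B) ^ (n - 1) *ᵥ w) i} = Fintype.card (Fin n) := by
    have := hcard (n - 1)
    have := card_le_univ (({i | 0 < ((1 + B) ^ (n - 1) *ᵥ w) i} : Finset (Fin n)))
    simp only [Fintype.card_fin] at *
    omega
  have hi : i ∈ ({i | 0 < ((1 + B) ^ (n - 1) *ᵥ w) i} : Finset (Fin n)) := by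
    rw [eq_univ_of_card _ hfull]; exact mem_univ i
  simpa using hi

-- A nonnegative eigenvector with a zero entry would stay zero there under `(1 + B) ^ (n - 1)`.
lemma eq_zero_of_mulVec_eq_smul (hB : ∀ i j, 0 ≤ B i j) (hirr : IsIrred B)
    {w : Fin n → ℝ} (hw : ∀ i, 0 ≤ w i) {μ : ℝ} (h : B *ᵥ w = μ • w) {i : Fin n}
    (hi : w i = 0) : w = 0 := by
  by_contra hne
  obtain ⟨j, hj⟩ := Function.ne_iff.mp hne
  have := hirr.one_add_pow_mulVec_pos hB hw ⟨j, (hw j).lt_of_ne' hj⟩ i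
  rw [one_add_pow_mulVec_of_mulVec_eq_smul h, Pi.smul_apply, hi, smul_zero] at this
  exact this.false

lemma exists_eq_smul_of_mulVec_eq_smul (hB : ∀ i j, 0 ≤ B i j) (hirr : IsIrred B)
    {u v : Fin n → ℝ} (hv : ∀ i, 0 < v i) {μ : ℝ}
    (hBu : B *ᵥ u = μ • u) (hBv : B *ᵥ v = μ • v) : ∃ c : ℝ, u = c • v := by
  rcases isEmpty_or_nonempty (Fin n) with hn | hn
  · exact ⟨0, Subsingleton.elim _ _⟩
  obtain ⟨i, -, hi⟩ := exists_min_image univ (fun j => u j / v j) univ_nonempty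
  set c := u i / v i
  refine ⟨c, sub_eq_zero.mp (hirr.eq_zero_of_mulVec_eq_smul hB (w := u - c • v) (μ := μ)
    (fun j => ?_) ?_ (i := i) ?_)⟩
  · simpa [sub_nonneg, ← le_div_iff₀ (hv j)] using hi j (mem_univ _)
  · rw [mulVec_sub, mulVec_smul, hBu, hBv, smul_sub, smul_comm]
  · simp [c, div_mul_cancel₀ _ (hv i).ne']

lemma mulVec_eq_of_mulVec_le (hB : ∀ i j, 0 ≤ B i j) (hirr : IsIrred B)
    {v : Fin n → ℝ} (hv : ∀ i, 0 < v i) (h : ∀ i, (B *ᵥ v) i ≤ specRad B * v i) :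
    B *ᵥ v = specRad B • v := by
  by_contra hne
  obtain ⟨i₀, hi₀⟩ := Function.ne_iff.mp hne
  have : NeZero n := NeZero.of_pos i₀.pos
  set w := specRad B • v - B *ᵥ v
  have hw : ∀ i, 0 ≤ w i := fun i => by simpa [w] using h i
  have hCw :=
    hirr.one_add_pow_mulVec_pos hB hw ⟨i₀, by simpa [w] using (h i₀).lt_of_ne hi₀⟩
  have hCv := hirr.one_add_pow_mulVec_pos hB (fun i => (hv i).le) ⟨i₀, hv i₀⟩
  have hBCv : B *ᵥ ((1 + B) ^ (n - 1) *ᵥ v) =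
      specRad B • ((1 + B) ^ (n - 1) *ᵥ v) - (1 + B) ^ (n - 1) *ᵥ w := by
    rw [mulVec_one_add_pow_mulVec, mulVec_sub, mulVec_smul, sub_sub_cancel]
  refine (specRad_lt_of_mulVec_lt hB hCv fun i => ?_).false
  rw [hBCv, Pi.sub_apply, Pi.smul_apply, smul_eq_mul]
  linarith [hCw i]

lemma mulVec_eq_of_le_mulVec (hB : ∀ i j, 0 ≤ B i j) (hirr : IsIrred B)
    {v : Fin n → ℝ} (hv : ∀ i, 0 < v i) (h : ∀ i, specRad B * v i ≤ (B *ᵥ v) i) :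
    B *ᵥ v = specRad B • v := by
  by_contra hne
  obtain ⟨i₀, hi₀⟩ := Function.ne_iff.mp hne
  have : NeZero n := NeZero.of_pos i₀.pos
  set w := B *ᵥ v - specRad B • v
  have hw : ∀ i, 0 ≤ w i := fun i => by simpa [w] using h i
  have hCw :=
    hirr.one_add_pow_mulVec_pos hB hw ⟨i₀, by simpa [w] using (h i₀).lt_of_ne' hi₀⟩
  have hCv := hirr.one_add_pow_mulVec_pos hB (fun i => (hv i).le) ⟨i₀, hv i₀⟩
  have hBCv : B *ᵥ ((1 + B) ^ (n - 1) *ᵥ v) =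
      specRad B • ((1 + B) ^ (n - 1) *ᵥ v) + (1 + B) ^ (n - 1) *ᵥ w := by
    rw [mulVec_one_add_pow_mulVec, mulVec_sub, mulVec_smul, add_sub_cancel]
  refine (lt_specRad_of_lt_mulVec hB hCv fun i => ?_).false
  rw [hBCv, Pi.add_apply, Pi.smul_apply, smul_eq_mul]
  linarith [hCw i]

end IsIrred

section RowSums

variable {ι : Type*} [Fintype ι]

lemma mulVec_mul_mulVec_le {P Q : Matrix ι ι ℝ} {v : ι → ℝ} {t : ℝ} {i : ι}
    (hP : ∀ j, 0 ≤ P i j) (hPv : 0 < (P *ᵥ v) i)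
    (h : ∀ j, 0 < P i j → (P *ᵥ v) i * (Q *ᵥ v) j ≤ t * (v i * v j)) :
    ((P * Q) *ᵥ v) i ≤ t * v i := by
  have hterm : ∀ j, P i j * ((P *ᵥ v) i * (Q *ᵥ v) j) ≤ P i j * (t * (v i * v j)) :=
    fun j => (hP j).eq_or_lt.elim (fun h₀ => by rw [← h₀, zero_mul, zero_mul])
      fun hpos => mul_le_mul_of_nonneg_left (h j hpos) hpos.le
  refine le_of_mul_le_mul_left ?_ hPv
  calc (P *ᵥ v) i * ((P * Q) *ᵥ v) i = (P *ᵥ v) i * ∑ j, P i j * (Q *ᵥ v) j := by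
        rw [← mulVec_mulVec]; rfl
    _ = ∑ j, P i j * ((P *ᵥ v) i * (Q *ᵥ v) j) := by
        rw [mul_sum]; exact sum_congr rfl fun j _ => by ring
    _ ≤ ∑ j, P i j * (t * (v i * v j)) := sum_le_sum fun j _ => hterm j
    _ = (P *ᵥ v) i * (t * v i) := by
        rw [show (P *ᵥ v) i = ∑ j, P i j * v j from rfl, sum_mul]
        exact sum_congr rfl fun j _ => by ring

lemma le_mulVec_mul_mulVec {P Q : Matrix ι ι ℝ} {v : ι → ℝ} {t : ℝ} {i : ι}
    (hP : ∀ j, 0 ≤ P i j) (hPv : 0 < (P *ᵥ v) i)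
    (h : ∀ j, 0 < P i j → t * (v i * v j) ≤ (P *ᵥ v) i * (Q *ᵥ v) j) :
    t * v i ≤ ((P * Q) *ᵥ v) i := by
  have := mulVec_mul_mulVec_le (Q := -Q) (t := -t) hP hPv fun j hj => by
    simpa [neg_mulVec] using h j hj
  simpa [neg_mulVec] using this

end RowSums

section RowSumBounds

variable {n : ℕ} {A : Matrix (Fin n) (Fin n) ℝ}

lemma rowSum_eq_mulVec_one (A : Matrix (Fin n) (Fin n) ℝ) : rowSum A = A *ᵥ 1 := by
  ext i; simp [rowSum, mulVec, dotProduct]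

lemma rowSum_pow_add (A : Matrix (Fin n) (Fin n) ℝ) (k m : ℕ) :
    rowSum (A ^ (k + m)) = A ^ m *ᵥ rowSum (A ^ k) := by
  rw [rowSum_eq_mulVec_one, rowSum_eq_mulVec_one, mulVec_mulVec, ← pow_add, add_comm]

lemma rowSum_pow_succ (A : Matrix (Fin n) (Fin n) ℝ) (k : ℕ) :
    rowSum (A ^ (k + 1)) = A *ᵥ rowSum (A ^ k) := by
  rw [rowSum_pow_add, pow_one]

lemma rowSum_pow_pos (hA : ∀ i j, 0 ≤ A i j) (hr : ∀ i, rowSum A i ≠ 0) (m : ℕ)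
    (i : Fin n) : 0 < rowSum (A ^ m) i := by
  induction m generalizing i with
  | zero => simp [rowSum, one_apply]
  | succ m ih =>
    rw [pow_succ', rowSum_eq_mulVec_one, ← mulVec_mulVec, ← rowSum_eq_mulVec_one]
    exact mulVec_pos hA hr ih i

lemma rowSum_succ_div_eq_specRad [NeZero n] (hA : ∀ i j, 0 ≤ A i j)
    (hr : ∀ i, rowSum A i ≠ 0) {p k : ℕ} (hirr : IsIrred (A ^ p))
    (h : A ^ p *ᵥ rowSum (A ^ k) = specRad (A ^ p) • rowSum (A ^ k)) (i : Fin n) :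
    rowSum (A ^ (k + 1)) i / rowSum (A ^ k) i = specRad A := by
  have hv := rowSum_pow_pos hA hr k
  have hAv : A ^ p *ᵥ (A *ᵥ rowSum (A ^ k)) = specRad (A ^ p) • (A *ᵥ rowSum (A ^ k)) := by
    rw [mulVec_mulVec, ← pow_succ, pow_succ', ← mulVec_mulVec, h, mulVec_smul]
  obtain ⟨c, hc⟩ := hirr.exists_eq_smul_of_mulVec_eq_smul (pow_apply_nonneg hA p) hv hAv h
  rw [rowSum_pow_succ, hc, specRad_eq_of_mulVec_eq_smul hA hv hc, Pi.smul_apply,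
    smul_eq_mul, mul_div_cancel_right₀ _ (hv i).ne']

def rowSumBoundSet (A : Matrix (Fin n) (Fin n) ℝ) (M N k : ℕ) : Set ℝ :=
  {x | ∃ i j : Fin n, 0 < (A ^ M) i j ∧
    x = (rowSum (A ^ (k + M)) i * rowSum (A ^ (k + N)) j /
      (rowSum (A ^ k) i * rowSum (A ^ k) j)) ^ (((M : ℝ) + N))⁻¹}

lemma rowSumBoundSet_finite (A : Matrix (Fin n) (Fin n) ℝ) (M N k : ℕ) :
    (rowSumBoundSet A M N k).Finite :=
  (Set.finite_range fun p : Fin n × Fin n => (rowSum (A ^ (k + M)) p.1 * rowSum (A ^ (k + N)) p.2 /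
      (rowSum (A ^ k) p.1 * rowSum (A ^ k) p.2)) ^ (((M : ℝ) + N))⁻¹).subset
    fun _ ⟨i, j, _, hx⟩ => ⟨(i, j), hx.symm⟩

lemma rowSumBoundSet_eq_singleton [NeZero n] (hA : ∀ i j, 0 ≤ A i j)
    (hr : ∀ i, rowSum A i ≠ 0) {M N k : ℕ} (hMN : 0 < M + N)
    (h : ∀ i, rowSum (A ^ (k + 1)) i / rowSum (A ^ k) i = specRad A) :
    rowSumBoundSet A M N k = {specRad A} := by
  have hv := rowSum_pow_pos hA hr k
  have hAv : A *ᵥ rowSum (A ^ k) = specRad A • rowSum (A ^ k) := by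
    ext i
    rw [← rowSum_pow_succ, Pi.smul_apply, smul_eq_mul, ← h i, div_mul_cancel₀ _ (hv i).ne']
  have hpow : ∀ m, A ^ m *ᵥ rowSum (A ^ k) = specRad A ^ m • rowSum (A ^ k) := by
    intro m
    induction m with
    | zero => simp
    | succ m ih => rw [pow_succ, ← mulVec_mulVec, hAv, mulVec_smul, ih, smul_smul, pow_succ']
  have hval : ∀ i j, (rowSum (A ^ (k + M)) i * rowSum (A ^ (k + N)) j /
      (rowSum (A ^ k) i * rowSum (A ^ k) j)) ^ (((M : ℝ) + N))⁻¹ = specRad A := by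
    intro i j
    simp only [rowSum_pow_add, hpow, Pi.smul_apply, smul_eq_mul]
    rw [show specRad A ^ M * rowSum (A ^ k) i * (specRad A ^ N * rowSum (A ^ k) j) /
      (rowSum (A ^ k) i * rowSum (A ^ k) j) = specRad A ^ (M + N) by
        field_simp [(hv i).ne', (hv j).ne']; ring,
      ← Real.rpow_natCast, ← Real.rpow_mul (specRad_nonneg A), Nat.cast_add,
      mul_inv_cancel₀ (by exact_mod_cast hMN.ne'), Real.rpow_one]
  obtain ⟨j, -, hj⟩ := exists_lt_of_sum_lt (f := fun _ => (0 : ℝ)) (s := univ)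
    (by simpa [rowSum] using rowSum_pow_pos hA hr M 0)
  refine Set.eq_singleton_iff_unique_mem.mpr ⟨⟨0, j, hj, (hval 0 j).symm⟩, ?_⟩
  rintro _ ⟨i, j, -, rfl⟩
  exact hval i j

lemma rowSumBound_base_pos (hA : ∀ i j, 0 ≤ A i j) (hr : ∀ i, rowSum A i ≠ 0) (M N k : ℕ)
    (i j : Fin n) : 0 < rowSum (A ^ (k + M)) i * rowSum (A ^ (k + N)) j /
      (rowSum (A ^ k) i * rowSum (A ^ k) j) := by
  have := rowSum_pow_pos hA hr
  exact div_pos (mul_pos (this _ i) (this _ j)) (mul_pos (this _ i) (this _ j))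

lemma pow_add_mulVec_rowSum_le (hA : ∀ i j, 0 ≤ A i j) (hr : ∀ i, rowSum A i ≠ 0)
    {M N k : ℕ} (hMN : 0 < M + N) (h : ∀ x ∈ rowSumBoundSet A M N k, x ≤ specRad A)
    (i : Fin n) :
    (A ^ (M + N) *ᵥ rowSum (A ^ k)) i ≤ specRad A ^ (M + N) * rowSum (A ^ k) i := by
  have hv := rowSum_pow_pos hA hr k
  have hPv : 0 < (A ^ M *ᵥ rowSum (A ^ k)) i := by
    rw [← rowSum_pow_add]; exact rowSum_pow_pos hA hr _ i
  rw [pow_add A]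
  refine mulVec_mul_mulVec_le (pow_apply_nonneg hA M i) hPv fun j hij => ?_
  rw [← rowSum_pow_add, ← rowSum_pow_add, ← div_le_iff₀ (mul_pos (hv i) (hv j))]
  have := h _ ⟨i, j, hij, rfl⟩
  rwa [Real.rpow_inv_le_iff_of_pos (rowSumBound_base_pos hA hr M N k i j).le
    (specRad_nonneg A) (by exact_mod_cast hMN), ← Nat.cast_add, Real.rpow_natCast] at this

lemma le_pow_add_mulVec_rowSum (hA : ∀ i j, 0 ≤ A i j) (hr : ∀ i, rowSum A i ≠ 0)
    {M N k : ℕ} (hMN : 0 < M + N) (h : ∀ x ∈ rowSumBoundSet A M N k, specRad A ≤ x)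
    (i : Fin n) :
    specRad A ^ (M + N) * rowSum (A ^ k) i ≤ (A ^ (M + N) *ᵥ rowSum (A ^ k)) i := by
  have hv := rowSum_pow_pos hA hr k
  have hPv : 0 < (A ^ M *ᵥ rowSum (A ^ k)) i := by
    rw [← rowSum_pow_add]; exact rowSum_pow_pos hA hr _ i
  rw [pow_add A]
  refine le_mulVec_mul_mulVec (pow_apply_nonneg hA M i) hPv fun j hij => ?_
  rw [← rowSum_pow_add, ← rowSum_pow_add, ← le_div_iff₀ (mul_pos (hv i) (hv j))]
  have := h _ ⟨i, j, hij, rfl⟩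
  rwa [Real.le_rpow_inv_iff_of_pos (specRad_nonneg A)
    (rowSumBound_base_pos hA hr M N k i j).le (by exact_mod_cast hMN), ← Nat.cast_add,
    Real.rpow_natCast] at this

end RowSumBounds

/-- Theorem 8 of the paper.
For a nonnegative matrix `A` with nonzero row sums, `M > 0`, `N ≥ 0`, `k ≥ 0`, such that
`A^{M+N}` is irreducible, equality holds on either side (and hence both sides) of the
generalized Xu–Xu bound iff `r_i(A^{k+1}) / r_i(A^k) = ρ(A)` for every `i`. -/
theorem stmt11 {n : ℕ} (A : Matrix (Fin n) (Fin n) ℝ)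
    (hA : ∀ i j, 0 ≤ A i j) (hr : ∀ i, rowSum A i ≠ 0) (M N k : ℕ) (hM : 0 < M)
    (hirr : IsIrred (A ^ (M + N))) :
    (specRad A = sSup {x : ℝ | ∃ i j : Fin n, 0 < (A ^ M) i j ∧
        x = (rowSum (A ^ (k + M)) i * rowSum (A ^ (k + N)) j /
              (rowSum (A ^ k) i * rowSum (A ^ k) j)) ^ (((M : ℝ) + N))⁻¹} ↔
      ∀ i : Fin n, rowSum (A ^ (k + 1)) i / rowSum (A ^ k) i = specRad A) ∧
    (specRad A = sInf {x : ℝ | ∃ i j : Fin n, 0 < (A ^ M) i j ∧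
        x = (rowSum (A ^ (k + M)) i * rowSum (A ^ (k + N)) j /
              (rowSum (A ^ k) i * rowSum (A ^ k) j)) ^ (((M : ℝ) + N))⁻¹} ↔
      ∀ i : Fin n, rowSum (A ^ (k + 1)) i / rowSum (A ^ k) i = specRad A) := by
  change (specRad A = sSup (rowSumBoundSet A M N k) ↔ _) ∧
    (specRad A = sInf (rowSumBoundSet A M N k) ↔ _)
  rcases Nat.eq_zero_or_pos n with rfl | hn
  · simp [rowSumBoundSet, specRad_of_isEmpty]
  have : NeZero n := NeZero.of_pos hn
  have hMN : 0 < M + N := by omega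
  have hB := pow_apply_nonneg hA (M + N)
  have hv := rowSum_pow_pos hA hr k
  have hS := rowSumBoundSet_finite A M N k
  refine ⟨⟨fun h => ?_, fun h => ?_⟩, ⟨fun h => ?_, fun h => ?_⟩⟩
  · refine rowSum_succ_div_eq_specRad hA hr hirr (hirr.mulVec_eq_of_mulVec_le hB hv fun i => ?_)
    rw [specRad_pow A hMN]
    exact pow_add_mulVec_rowSum_le hA hr hMN (fun x hx => h ▸ le_csSup hS.bddAbove hx) i
  · rw [rowSumBoundSet_eq_singleton hA hr hMN h, csSup_singleton]
  · refine rowSum_succ_div_eq_specRad hA hr hirr (hirr.mulVec_eq_of_le_mulVec hB hv fun i => ?_)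
    rw [specRad_pow A hMN]
    exact le_pow_add_mulVec_rowSum hA hr hMN (fun x hx => h ▸ csInf_le hS.bddBelow hx) i
  · rw [rowSumBoundSet_eq_singleton hA hr hMN h, csInf_singleton]
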